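/- Let (V, S) be a spanning tree of a graph on V, s ≠ t in V, T := {v : deg_S(v) odd} △ {s} △ {t}, and let δ(U) be an s-t-cut (s ∈ U, t ∉ U) with |S ∩ δ(U)| = 1. Then |U ∩ T| is even. -/

import Mathlib

open Finset
open scoped symmDiff

open scoped Classical in
/-- The set of edges `δ(U)` of the complete graph on `V` with exactly one endpoint in `U`. -/
noncomputable def cutEdges {V : Type*} [Fintype V] (U : Finset V) : Finset (Sym2 V) :=
  Finset.univ.filter (fun e => ∃ v w : V, e = s(v, w) ∧ v ∈ U ∧ w ∉ U)

open scoped Classical in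
/-- The degree of `v` in the edge set `S`. -/
noncomputable def degS {V : Type*} (S : Finset (Sym2 V)) (v : V) : ℕ :=
  (S.filter (fun e => v ∈ e)).card

open scoped Classical in
/-- Parity correction set `T = {v : deg_S(v) odd} △ {s} △ {t}`. -/
noncomputable def wrongParity {V : Type*} [Fintype V] (S : Finset (Sym2 V)) (s t : V) :
    Finset V :=
  (Finset.univ.filter (fun v => Odd (degS S v))) ∆ {s} ∆ {t}

/-!
Work modulo 2. Since `s ∈ U` and `t ∉ U`, `U ∩ T` is `{v ∈ U : deg_S v odd} △ {s}`, so
`|U ∩ T| ≡ ∑_{v ∈ U} deg_S v + 1`. Double counting turns `∑_{v ∈ U} deg_S v` into the sum over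
the edges of `S` of their number of endpoints in `U`; for a non-loop this is odd exactly when the
edge lies in `δ(U)`. Hence `|U ∩ T| ≡ |S ∩ δ(U)| + 1 = 2 ≡ 0`.
-/

lemma mk_mem_cutEdges_iff {V : Type*} [Fintype V] {U : Finset V} {a b : V} :
    s(a, b) ∈ cutEdges U ↔ ¬(a ∈ U ↔ b ∈ U) := by
  simp only [cutEdges, mem_filter, mem_univ, true_and, Sym2.eq_iff]
  constructor
  · rintro ⟨v, w, ⟨rfl, rfl⟩ | ⟨rfl, rfl⟩, hv, hw⟩ <;> tauto
  · intro h
    by_cases ha : a ∈ U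
    · exact ⟨a, b, Or.inl ⟨rfl, rfl⟩, ha, fun hb => h ⟨fun _ => hb, fun _ => ha⟩⟩
    · exact ⟨b, a, Or.inr ⟨rfl, rfl⟩, by tauto, ha⟩

lemma card_filter_mem_mk_cast_zmod_two {V : Type*} [Fintype V] [DecidableEq V] (U : Finset V)
    {a b : V} (hab : a ≠ b) :
    (#(U.filter (· ∈ s(a, b))) : ZMod 2) = if s(a, b) ∈ cutEdges U then 1 else 0 := by
  have hfilter : U.filter (· ∈ s(a, b)) = U ∩ {a, b} := by
    ext v; simp
  simp only [hfilter, mk_mem_cutEdges_iff]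
  by_cases ha : a ∈ U <;> by_cases hb : b ∈ U <;>
    simp [ha, hb, inter_insert_of_mem, inter_insert_of_notMem, card_pair hab]
  decide

lemma sum_degS_eq_sum_card_filter_mem {V : Type*} [DecidableEq V] (S : Finset (Sym2 V))
    (U : Finset V) : ∑ v ∈ U, degS S v = ∑ e ∈ S, #(U.filter (· ∈ e)) := by
  convert sum_card_bipartiteAbove_eq_sum_card_bipartiteBelow (s := U) (t := S) (r := (· ∈ ·))
    using 3
  · simp only [degS, bipartiteAbove]
    congr
  · rfl

lemma card_inter_cutEdges_cast_eq_sum_degS {V : Type*} [Fintype V] [DecidableEq V]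
    {S : Finset (Sym2 V)} (hdiag : ∀ e ∈ S, ¬e.IsDiag) (U : Finset V) :
    (#(S ∩ cutEdges U) : ZMod 2) = ∑ v ∈ U, (degS S v : ZMod 2) := by
  have hedge : ∀ e ∈ S, (#(U.filter (· ∈ e)) : ZMod 2) = if e ∈ cutEdges U then 1 else 0 := by
    intro e he
    induction e using Sym2.ind with
    | h a b => exact card_filter_mem_mk_cast_zmod_two U (Sym2.mk_isDiag_iff.not.mp (hdiag _ he))
  rw [← Nat.cast_sum, sum_degS_eq_sum_card_filter_mem, Nat.cast_sum, sum_congr rfl hedge,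
    sum_boole, filter_mem_eq_inter]

lemma card_filter_odd_cast_zmod_two {α : Type*} (U : Finset α) (f : α → ℕ) :
    (#(U.filter (fun a => Odd (f a))) : ZMod 2) = ∑ a ∈ U, (f a : ZMod 2) := by
  rw [← sum_boole]
  refine sum_congr rfl fun a _ => ?_
  rcases Nat.even_or_odd (f a) with h | h
  · simp [Nat.not_odd_iff_even.mpr h, (ZMod.natCast_eq_zero_iff_even).mpr h]
  · simp [h, (ZMod.natCast_eq_one_iff_odd).mpr h]

lemma card_symmDiff_singleton_cast_zmod_two {α : Type*} [DecidableEq α] (A : Finset α) (a : α) :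
    (#(A ∆ {a}) : ZMod 2) = #A + 1 := by
  by_cases ha : a ∈ A
  · have : A ∆ {a} = A.erase a := by
      ext x; by_cases hx : x = a <;> simp [mem_symmDiff, hx, ha]
    rw [this, ← card_erase_add_one ha, Nat.cast_add, Nat.cast_one, add_assoc,
      CharTwo.add_self_eq_zero, add_zero]
  · have : A ∆ {a} = insert a A := by
      ext x; by_cases hx : x = a <;> simp [mem_symmDiff, hx, ha]
    rw [this, card_insert_of_notMem ha, Nat.cast_add, Nat.cast_one]

lemma inter_wrongParity_eq {V : Type*} [Fintype V] [DecidableEq V] (S : Finset (Sym2 V))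
    {s t : V} {U : Finset V} (hsU : s ∈ U) (htU : t ∉ U) :
    U ∩ wrongParity S s t = U.filter (fun v => Odd (degS S v)) ∆ {s} := by
  have hst : s ≠ t := ne_of_mem_of_not_mem hsU htU
  ext v
  by_cases hvs : v = s
  · subst hvs; simp [wrongParity, mem_symmDiff, hsU, hst]
  by_cases hvt : v = t
  · subst hvt; simp [wrongParity, mem_symmDiff, htU, hvs]
  simp [wrongParity, mem_symmDiff, hvs, hvt]

theorem stmt_6_general {V : Type*} [Fintype V] [DecidableEq V] (s t : V)
    (S : Finset (Sym2 V)) (hdiag : ∀ e ∈ S, ¬ e.IsDiag)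
    (U : Finset V) (hsU : s ∈ U) (htU : t ∉ U)
    (hlonely : (S ∩ cutEdges U).card = 1) :
    Even ((U ∩ wrongParity S s t).card) := by
  rw [← ZMod.natCast_eq_zero_iff_even, inter_wrongParity_eq S hsU htU,
    card_symmDiff_singleton_cast_zmod_two, card_filter_odd_cast_zmod_two,
    ← card_inter_cutEdges_cast_eq_sum_degS hdiag, hlonely]
  decide

/-- A lonely cut (an `s`-`t`-cut crossed exactly once by the spanning tree `S`) is not a
`T`-cut: `|U ∩ T|` is even. -/
theorem stmt_6 {V : Type*} [Fintype V] [DecidableEq V] (s t : V) (hst : s ≠ t)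
    (S : Finset (Sym2 V)) (hdiag : ∀ e ∈ S, ¬ e.IsDiag)
    (htree : (SimpleGraph.fromEdgeSet (S : Set (Sym2 V))).IsTree)
    (U : Finset V) (hsU : s ∈ U) (htU : t ∉ U)
    (hlonely : (S ∩ cutEdges U).card = 1) :
    Even ((U ∩ wrongParity S s t).card) :=
  stmt_6_general s t S hdiag U hsU htU hlonely
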